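/- arXiv:1704.08067 — 2 statements merged into one kernel-verified Lean document; each statement's English description precedes it below -/
import Mathlib

section
/- Let weights w^1,...,w^n > 0, labels y^i ∈ {−1,1}, and predictions f^i ∈ {−1,1} with weighted error err = (∑_i w^i · 1(y^i ≠ f^i))/(∑_i w^i) satisfying 0 < err < 1. Then the value α ∈ R minimizing ∑_i w^i exp(−y^i α f^i) is α = (1/2)·log((1−err)/err), and the minimum value equals (∑_i w^i)·2·√(err(1−err)). -/
open Finset

private lemma amgm' (x z : ℝ) (hx : 0 ≤ x) (hz : 0 ≤ z) :
    2 * Real.sqrt (x * z) ≤ x + z := by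
  nlinarith [sq_nonneg (Real.sqrt x - Real.sqrt z), Real.sq_sqrt hx, Real.sq_sqrt hz,
    Real.sqrt_mul hx z, Real.sqrt_nonneg x, Real.sqrt_nonneg z]

private lemma exp_half_log (r : ℝ) (hr : 0 < r) :
    Real.exp ((1 / 2) * Real.log r) = Real.sqrt r := by
  rw [Real.sqrt_eq_rpow, Real.rpow_def_of_pos hr]
  ring_nf

/-- The optimal AdaBoost coefficient: `α = (1/2) log((1−err)/err)` minimizes the weighted
exponential loss `α ↦ ∑ i, wⁱ exp(−yⁱ α fⁱ)`, and the minimum equals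
`(∑ i, wⁱ) · 2 √(err (1 − err))`. -/
theorem adaboost_optimal_alpha
    (n : ℕ) (w y f : Fin n → ℝ)
    (hw : ∀ i, 0 < w i)
    (hy : ∀ i, y i = 1 ∨ y i = -1)
    (hf : ∀ i, f i = 1 ∨ f i = -1)
    (err : ℝ)
    (herr : err = (∑ i, w i * (if y i ≠ f i then (1 : ℝ) else 0)) / ∑ i, w i)
    (h0 : 0 < err) (h1 : err < 1) :
    (∀ α : ℝ,
        ∑ i, w i * Real.exp (-(y i) * ((1 / 2) * Real.log ((1 - err) / err)) * f i) ≤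
          ∑ i, w i * Real.exp (-(y i) * α * f i)) ∧
      ∑ i, w i * Real.exp (-(y i) * ((1 / 2) * Real.log ((1 - err) / err)) * f i) =
        (∑ i, w i) * 2 * Real.sqrt (err * (1 - err)) := by
  set S := ∑ i, w i with hSdef
  set A := ∑ i, w i * (if y i ≠ f i then (1 : ℝ) else 0) with hAdef
  have hSnn : 0 ≤ S := Finset.sum_nonneg fun i _ => (hw i).le
  have hSpos : 0 < S := by
    rcases hSnn.lt_or_eq with h | h
    · exact h
    · exfalso; rw [herr, ← h, div_zero] at h0; exact lt_irrefl 0 h0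
  have hA : A = err * S := by
    rw [herr]; field_simp
  have hApos : 0 < A := by rw [hA]; positivity
  have hBpos : 0 < S - A := by rw [hA]; nlinarith
  -- rewrite the loss as a function of α only
  have key : ∀ α : ℝ, ∑ i, w i * Real.exp (-(y i) * α * f i)
      = (S - A) * Real.exp (-α) + A * Real.exp α := by
    intro α
    have hterm : ∀ i : Fin n, w i * Real.exp (-(y i) * α * f i)
        = w i * Real.exp (-α)
          + (w i * (if y i ≠ f i then (1 : ℝ) else 0)) * (Real.exp α - Real.exp (-α)) := by
      intro i
      by_cases h : y i = f i
      · have h1 : -(y i) * α * f i = -α := by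
          rcases hy i with hy1 | hy1 <;> rcases hf i with hf1 | hf1 <;>
            rw [hy1, hf1] at h ⊢ <;> first | ring1 | norm_num at h
        rw [h1]; simp [h]
      · have h1 : -(y i) * α * f i = α := by
          rcases hy i with hy1 | hy1 <;> rcases hf i with hf1 | hf1 <;>
            rw [hy1, hf1] at h ⊢ <;> first | ring1 | exact absurd rfl h
        rw [h1]; simp [h]; ring
    rw [Finset.sum_congr rfl fun i _ => hterm i, Finset.sum_add_distrib,
      ← Finset.sum_mul, ← Finset.sum_mul, ← hSdef, ← hAdef]
    ring
  have h1e : (0 : ℝ) < 1 - err := by linarith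
  set αs : ℝ := (1 / 2) * Real.log ((1 - err) / err) with hαs
  have hr : (0 : ℝ) < (1 - err) / err := div_pos h1e h0
  have hexp : Real.exp αs = Real.sqrt ((1 - err) / err) := exp_half_log _ hr
  have hexpneg : Real.exp (-αs) = Real.sqrt (err / (1 - err)) := by
    have hlog : -αs = (1 / 2) * Real.log (err / (1 - err)) := by
      rw [hαs, show (err / (1 - err)) = ((1 - err) / err)⁻¹ by rw [inv_div],
        Real.log_inv]
      ring
    rw [hlog]
    exact exp_half_log _ (div_pos h0 h1e)
  have hs1 : Real.sqrt (1 - err) ≠ 0 := by positivity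
  have hs0 : Real.sqrt err ≠ 0 := by positivity
  have key1 : Real.sqrt (err / (1 - err)) * (1 - err) = Real.sqrt (err * (1 - err)) := by
    rw [Real.sqrt_div h0.le, Real.sqrt_mul h0.le, div_mul_eq_mul_div, div_eq_iff hs1,
      mul_assoc, Real.mul_self_sqrt h1e.le]
  have key2 : Real.sqrt ((1 - err) / err) * err = Real.sqrt (err * (1 - err)) := by
    rw [Real.sqrt_div h1e.le, Real.sqrt_mul h0.le, div_mul_eq_mul_div, div_eq_iff hs0]
    linear_combination (-Real.sqrt (1 - err)) * (Real.mul_self_sqrt h0.le)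
  have e1 : (S - A) * Real.exp (-αs) = S * Real.sqrt (err * (1 - err)) := by
    rw [hexpneg, hA, show (S - err * S) * Real.sqrt (err / (1 - err))
      = S * (Real.sqrt (err / (1 - err)) * (1 - err)) from by ring, key1]
  have e2 : A * Real.exp αs = S * Real.sqrt (err * (1 - err)) := by
    rw [hexp, hA, show err * S * Real.sqrt ((1 - err) / err)
      = S * (Real.sqrt ((1 - err) / err) * err) from by ring, key2]
  have hval : (S - A) * Real.exp (-αs) + A * Real.exp αs
      = S * 2 * Real.sqrt (err * (1 - err)) := by
    rw [e1, e2]; ring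
  constructor
  · intro α
    rw [key, key, hval]
    have hx : 0 ≤ (S - A) * Real.exp (-α) := by positivity
    have hz : 0 ≤ A * Real.exp α := by positivity
    have hprod : ((S - A) * Real.exp (-α)) * (A * Real.exp α)
        = (err * (1 - err)) * S ^ 2 := by
      have h2 : Real.exp (-α) * Real.exp α = 1 := by
        rw [← Real.exp_add]; simp
      rw [hA]
      linear_combination (err * S ^ 2 * (1 - err)) * h2
    have := amgm' _ _ hx hz
    rw [hprod, Real.sqrt_mul (by nlinarith : (0:ℝ) ≤ err * (1 - err)), Real.sqrt_sq hSnn] at this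
    linarith
  · rw [key, hval]
end

section
/- Ambiguity decomposition: let y ∈ R and f_1,...,f_M ∈ R, and let f̄ = (1/M)∑_{m=1}^M f_m. Then (y − f̄)² = (1/M)∑_{m=1}^M (y − f_m)² − (1/M)∑_{m=1}^M (f_m − f̄)². In particular, the squared error of the averaged prediction is at most the average squared error of the individual predictions. -/
open Finset

/-- Ambiguity decomposition (pointwise): the squared error of the averaged prediction
equals the average squared error minus the ambiguity term, hence is at most the
average squared error. -/
theorem ambiguity_decomposition
    (M : ℕ) (hM : 0 < M) (y : ℝ) (f : Fin M → ℝ) :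
    ((y - (1 / M : ℝ) * ∑ m, f m) ^ 2 =
        (1 / M : ℝ) * ∑ m, (y - f m) ^ 2 -
          (1 / M : ℝ) * ∑ m, (f m - (1 / M : ℝ) * ∑ k, f k) ^ 2) ∧
      (y - (1 / M : ℝ) * ∑ m, f m) ^ 2 ≤ (1 / M : ℝ) * ∑ m, (y - f m) ^ 2 := by
  have hMne : (M : ℝ) ≠ 0 := Nat.cast_ne_zero.mpr hM.ne'
  have hMpos : (0 : ℝ) < (M : ℝ) := Nat.cast_pos.mpr hM
  set S : ℝ := ∑ m, f m with hS
  have h1 : ∑ m, (y - f m) ^ 2 = M * y ^ 2 - 2 * y * S + ∑ m, (f m) ^ 2 := by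
    simp only [sub_sq, sum_add_distrib, sum_sub_distrib, sum_const, card_univ,
      Fintype.card_fin, nsmul_eq_mul, ← mul_sum, hS]
  have h2 : ∑ m, (f m - (1 / M : ℝ) * S) ^ 2 =
      (∑ m, (f m) ^ 2) - (1 / M : ℝ) * S ^ 2 := by
    simp only [sub_sq, sum_add_distrib, sum_sub_distrib, sum_const, card_univ,
      Fintype.card_fin, nsmul_eq_mul, ← sum_mul, ← mul_sum, hS]
    field_simp
    ring
  have heq : (y - (1 / M : ℝ) * S) ^ 2 =
      (1 / M : ℝ) * ∑ m, (y - f m) ^ 2 -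
        (1 / M : ℝ) * ∑ m, (f m - (1 / M : ℝ) * S) ^ 2 := by
    rw [h1, h2]
    field_simp
    ring
  refine ⟨heq, ?_⟩
  rw [heq]
  have : 0 ≤ (1 / M : ℝ) * ∑ m, (f m - (1 / M : ℝ) * S) ^ 2 :=
    mul_nonneg (by positivity) (sum_nonneg fun m _ => sq_nonneg _)
  linarith
end
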